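/- Exactness of the approximated Chebyshev coefficients for polynomials: let n ≥ 1, let f be a real polynomial, and let j be a natural number with deg f + j ≤ 2n − 1. Then the Gauss–Chebyshev quadrature approximation c_{j,n} := (2/n) ∑_{l=1}^{n} f(t_l) T_j(t_l), with t_l = cos((l − 1/2)π/n), equals the exact Chebyshev coefficient c_j = (2/π) ∫_{−1}^{1} f(t) T_j(t) (1 − t²)^{−1/2} dt. -/

import Mathlib

/-!
Both sides are linear in `f * T_j`, a polynomial of degree `< 2n`. Such polynomials are spanned
by `T_0, …, T_{2n-1}`, on which the Gauss–Chebyshev rule with nodes `t_l` is exact: this is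
Mathlib's `Polynomial.Chebyshev.integral_eq_sumZeroes`, with the nodes written as
`cos ((2i + 1)π / 2n)`, `0 ≤ i < n`.
-/

open Real Polynomial

namespace Polynomial.Chebyshev

lemma sumZeroes_eq_sum_Icc (n : ℕ) (P : ℝ[X]) :
    sumZeroes n P = π / n * ∑ l ∈ Finset.Icc 1 n, P.eval (cos (((l : ℝ) - 1 / 2) * π / n)) := by
  rw [sumZeroes, ← Finset.Ico_add_one_right_eq_Icc, Finset.sum_Ico_eq_sum_range]
  congr 1
  refine Finset.sum_congr rfl fun i _ => ?_
  push_cast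
  ring_nf

lemma degree_mul_T_lt {R : Type*} [CommRing R] [IsDomain R] [NeZero (2 : R)] {f : R[X]}
    {j m : ℕ} (h : f.natDegree + j < m) : (f * T R j).degree < m := by
  refine degree_le_natDegree.trans_lt (WithBot.coe_lt_coe.mpr ?_)
  calc (f * T R j).natDegree ≤ f.natDegree + (T R j).natDegree := natDegree_mul_le
    _ = f.natDegree + j := by rw [natDegree_T]; rfl
    _ < m := h

end Polynomial.Chebyshev

/-- Exactness of the approximated Chebyshev coefficients for polynomials: if
`deg f + j ≤ 2n - 1`, then the Gauss–Chebyshev quadrature approximation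
`c_{j,n} = (2/n) ∑_{l=1}^n f(t_l) T_j(t_l)` equals the exact coefficient
`c_j = (2/π) ∫_{-1}^1 f(t) T_j(t) (1-t²)^{-1/2} dt`. -/
theorem approx_chebyshev_coeff_exact (n : ℕ) (hn : 1 ≤ n) (f : Polynomial ℝ) (j : ℕ)
    (h : f.natDegree + j ≤ 2 * n - 1) :
    (2 / (n : ℝ)) *
        ∑ l ∈ Finset.Icc 1 n,
          f.eval (Real.cos (((l : ℝ) - 1 / 2) * Real.pi / n)) *
          (Polynomial.Chebyshev.T ℝ j).eval (Real.cos (((l : ℝ) - 1 / 2) * Real.pi / n))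
      = (2 / Real.pi) *
        ∫ t in (-1 : ℝ)..1,
          f.eval t * (Polynomial.Chebyshev.T ℝ j).eval t * (Real.sqrt (1 - t ^ 2))⁻¹ := by
  have hdeg : (f * Chebyshev.T ℝ j).degree < (2 * n : ℕ) := Chebyshev.degree_mul_T_lt (by omega)
  have quadrature :=
    Chebyshev.integral_eq_sumZeroes (Nat.one_le_iff_ne_zero.mp hn) (by exact_mod_cast hdeg)
  rw [Chebyshev.integral_measureT, Chebyshev.sumZeroes_eq_sum_Icc] at quadrature
  -- Mathlib's weight `√(1 - x ^ 2)⁻¹` parses as `√((1 - x ^ 2)⁻¹)`.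
  simp only [eval_mul, Real.sqrt_inv] at quadrature
  rw [quadrature, ← mul_assoc]
  congr 1
  field_simp
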